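/- (Gibson's theorem.) Let k be a unital ring and n > 1. The set of n×n generalised doubly stochastic matrices over k is a free k-module of rank (n-1)^2 + 1, and it admits a basis consisting entirely of permutation matrices; explicitly, the basis is {G_{r,c} : (r,c) ∈ Γ_n} ∪ {Q_n, I_n}, where Q_n is the circulant permutation matrix of the descending n-cycle (n, n-1, …, 1), Γ_n is the set of positions (r,c) at which Q_n + I_n has entry 0, and G_{r,c} is the unique n×n permutation matrix with entry 1 at position (r,c) whose remaining nonzero entries lie among the nonzero entries of Q_n + I_n. -/

import Mathlib

open Finset

/-- A square matrix over a (unital) ring is *generalised doubly stochastic* (GDS)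
if all of its row sums and all of its column sums have one common value. -/
def IsGDS {k : Type*} [Ring k] {n : ℕ} (M : Matrix (Fin n) (Fin n) k) : Prop :=
  ∃ s : k, (∀ i, ∑ j, M i j = s) ∧ (∀ j, ∑ i, M i j = s)

/-- The circulant permutation matrix `Q_n = (δ_{i, j+1 mod n})` of the descending
n-cycle `(n, n-1, …, 1)`. -/
def cQ (k : Type*) [Ring k] (n : ℕ) [NeZero n] : Matrix (Fin n) (Fin n) k :=
  Matrix.of fun i j => if i = j + 1 then 1 else 0

/-- `Γ_n`: the set of positions at which `Q_n + I_n` has entry 0, i.e. the pairs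
`(r,c)` with `r ≠ c` and `r ≠ c + 1 (mod n)`. -/
def gammaSet (n : ℕ) [NeZero n] : Set (Fin n × Fin n) :=
  {p | p.1 ≠ p.2 ∧ p.1 ≠ p.2 + 1}

section Aux

variable {k : Type*} [Ring k] {n : ℕ} [NeZero n]

omit [NeZero n] in
/-- Permutation matrices are GDS. -/
lemma permMatrix_isGDS (w : Equiv.Perm (Fin n)) :
    IsGDS (Matrix.of fun i j => if i = w j then (1 : k) else 0) := by
  refine ⟨1, fun i => ?_, fun j => ?_⟩
  · simp only [Matrix.of_apply]
    rw [Fintype.sum_equiv w _ (fun j => if i = j then (1:k) else 0) (fun j => rfl)]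
    simp
  · simp

/-- The GDS matrices form a submodule. -/
def gdsSubmodule (k : Type*) [Ring k] (n : ℕ) : Submodule k (Matrix (Fin n) (Fin n) k) where
  carrier := {M | IsGDS M}
  add_mem' := by
    rintro a b ⟨s, hs1, hs2⟩ ⟨t, ht1, ht2⟩
    exact ⟨s + t, fun i => by simp [Matrix.add_apply, Finset.sum_add_distrib, hs1 i, ht1 i],
      fun j => by simp [Matrix.add_apply, Finset.sum_add_distrib, hs2 j, ht2 j]⟩
  zero_mem' := ⟨0, by simp, by simp⟩
  smul_mem' := by
    rintro c a ⟨s, h1, h2⟩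
    exact ⟨c * s, fun i => by simp [Matrix.smul_apply, smul_eq_mul, ← Finset.mul_sum, h1 i],
      fun j => by simp [Matrix.smul_apply, smul_eq_mul, ← Finset.mul_sum, h2 j]⟩

end Aux
/-- Gibson's theorem: let `k` be a unital ring and `n > 1`.  Suppose that for each
`(r,c) ∈ Γ_n`, `G (r,c)` is the (unique) n×n permutation matrix with entry 1 at
position `(r,c)` whose remaining nonzero entries lie among the nonzero entries of
`Q_n + I_n`.  Then the family consisting of the `G (r,c)` for `(r,c) ∈ Γ_n`
together with `Q_n` and `I_n` is linearly independent, spans exactly the set of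
GDS matrices, and has `(n-1)^2 + 1` members; i.e. the n×n GDS matrices form a free
k-module of rank `(n-1)^2 + 1` with a basis of permutation matrices. -/
theorem stmt_19 {k : Type*} [Ring k] {n : ℕ} [NeZero n] (hn : 1 < n)
    (G : Fin n × Fin n → Matrix (Fin n) (Fin n) k)
    (hG : ∀ p ∈ gammaSet n,
      (∃ w : Equiv.Perm (Fin n),
        G p = Matrix.of fun i j => if i = w j then 1 else 0) ∧
      G p p.1 p.2 = 1 ∧
      ∀ i j : Fin n, ¬(i = p.1 ∧ j = p.2) → G p i j ≠ 0 → (i = j ∨ i = j + 1)) :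
    LinearIndependent k
        (Sum.elim (fun y : gammaSet n => G y.1)
          (fun b : Bool => if b then cQ k n else 1)) ∧
    {M : Matrix (Fin n) (Fin n) k | IsGDS M} =
      (Submodule.span k
        (Set.range
          (Sum.elim (fun y : gammaSet n => G y.1)
            (fun b : Bool => if b then cQ k n else 1))) : Set _) ∧
    Nat.card (gammaSet n) + 2 = (n-1)^2 + 1 := by
  classical
  set v : (gammaSet n) ⊕ Bool → Matrix (Fin n) (Fin n) k :=
    Sum.elim (fun y : gammaSet n => G y.1)
      (fun b : Bool => if b then cQ k n else 1) with hv
  -- basic Fin facts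
  have h10 : (1 : Fin n) ≠ 0 := by
    intro h0; have := Fin.one_eq_zero_iff.mp h0; omega
  have hadd : ∀ j : Fin n, j + 1 ≠ j := by
    intro j h
    exact h10 (add_left_cancel (a := j) (b := (1:Fin n)) (c := 0) (by rw [add_zero]; exact h))
  -- G vanishes at other Γ positions
  have hGzero : ∀ p ∈ gammaSet n, ∀ q ∈ gammaSet n, p ≠ q → G p q.1 q.2 = 0 := by
    intro p hp q hq hpq
    by_contra h
    rcases (hG p hp).2.2 q.1 q.2
        (fun hh => hpq (Prod.ext hh.1 hh.2).symm) h with h1 | h1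
    · exact hq.1 h1
    · exact hq.2 h1
  -- Q and I vanish on Γ
  have hQzero : ∀ q ∈ gammaSet n, cQ k n q.1 q.2 = 0 := by
    intro q hq; simp only [cQ, Matrix.of_apply]; exact if_neg hq.2
  have hIzero : ∀ q ∈ gammaSet n, (1 : Matrix (Fin n) (Fin n) k) q.1 q.2 = 0 := by
    intro q hq; exact Matrix.one_apply_ne hq.1
  have hQ10 : cQ k n 1 0 = 1 := by simp [cQ]
  have hQ00 : cQ k n 0 0 = 0 := by
    simp only [cQ, Matrix.of_apply]
    exact if_neg (by rw [zero_add]; exact fun h => h10 h.symm)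
  have hI10 : (1 : Matrix (Fin n) (Fin n) k) 1 0 = 0 :=
    Matrix.one_apply_ne h10
  -- Linear independence
  have hLI : LinearIndependent k v := by
    rw [linearIndependent_iff']
    intro s g hsum i hi
    have hentry : ∀ a b : Fin n, ∑ i ∈ s, g i * v i a b = 0 := by
      intro a b
      have := congrFun (congrFun hsum a) b
      rw [Matrix.sum_apply] at this
      simpa [Matrix.smul_apply, smul_eq_mul] using this
    have hcoords : ∀ (q : Fin n × Fin n) (hq : q ∈ gammaSet n),
        Sum.inl (⟨q, hq⟩ : gammaSet n) ∈ s → g (Sum.inl ⟨q, hq⟩) = 0 := by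
      intro q hq hmem
      have h := hentry q.1 q.2
      rw [Finset.sum_eq_single (Sum.inl (⟨q, hq⟩ : gammaSet n))] at h
      · rw [hv] at h
        simpa [(hG q hq).2.1] using h
      · rintro (⟨p, hp⟩ | b) hbs hne
        · have : p ≠ q := fun h' => hne (by simp [h'])
          rw [hv]; simp [hGzero p hp q hq this]
        · rw [hv]
          cases b
          · simp [hIzero q hq]
          · simp [hQzero q hq]
      · intro h'; exact absurd hmem h'
    rcases i with ⟨q, hq⟩ | b
    · exact hcoords q hq hi
    · have hQcoeff : Sum.inr true ∈ s → g (Sum.inr true) = 0 := by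
        intro hmem
        have h := hentry 1 0
        rw [Finset.sum_eq_single (Sum.inr true : (gammaSet n) ⊕ Bool)] at h
        · rw [hv] at h; simpa [hQ10] using h
        · rintro (⟨p, hp⟩ | b) hbs hne
          · rw [hcoords p hp hbs, zero_mul]
          · cases b
            · rw [hv]; simp [hI10]
            · exact absurd rfl hne
        · intro h'; exact absurd hmem h'
      have hIcoeff : Sum.inr false ∈ s → g (Sum.inr false) = 0 := by
        intro hmem
        have h := hentry 0 0
        rw [Finset.sum_eq_single (Sum.inr false : (gammaSet n) ⊕ Bool)] at h
        · rw [hv] at h; simpa using h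
        · rintro (⟨p, hp⟩ | b) hbs hne
          · rw [hcoords p hp hbs, zero_mul]
          · cases b
            · exact absurd rfl hne
            · rw [hv]; simp [hQ00]
        · intro h'; exact absurd hmem h'
      cases b
      · exact hIcoeff hi
      · exact hQcoeff hi
  refine ⟨hLI, ?_, ?_⟩
  · -- span = GDS
    have hsub : Submodule.span k (Set.range v) ≤ gdsSubmodule k n := by
      rw [Submodule.span_le]
      rintro _ ⟨i, rfl⟩
      rcases i with ⟨p, hp⟩ | b
      · obtain ⟨w, hw⟩ := (hG p hp).1
        show IsGDS (G p)
        rw [hw]; exact permMatrix_isGDS w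
      · cases b
      
        · show IsGDS (v (Sum.inr false))
          have : v (Sum.inr false) = Matrix.of fun i j => if i = (Equiv.refl (Fin n)) j then (1:k) else 0 := by
            rw [hv]
            funext i j
            simp [Matrix.one_apply]
            exact if_congr Iff.rfl rfl rfl
        
          rw [this]; exact permMatrix_isGDS _
        · show IsGDS (v (Sum.inr true))
          have : v (Sum.inr true) = Matrix.of fun i j => if i = (Equiv.addRight (1 : Fin n)) j then (1:k) else 0 := by
            rw [hv]
            funext i j
            simp [cQ]
            exact if_congr Iff.rfl rfl rfl
          rw [this]; exact permMatrix_isGDS _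
    ext M
    simp only [Set.mem_setOf_eq, SetLike.mem_coe]
    constructor
    · intro hM
      -- Γ as a finset
      let F : Finset (Fin n × Fin n) := Finset.univ.filter (· ∈ gammaSet n)
      set P : Matrix (Fin n) (Fin n) k := ∑ p ∈ F, M p.1 p.2 • G p with hPdef
      have hPmem : P ∈ Submodule.span k (Set.range v) := by
        apply Submodule.sum_mem
        intro p hp
        have hpΓ : p ∈ gammaSet n := (Finset.mem_filter.mp hp).2
        exact Submodule.smul_mem _ _
          (Submodule.subset_span ⟨Sum.inl ⟨p, hpΓ⟩, rfl⟩)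
      set N : Matrix (Fin n) (Fin n) k := M - P with hNdef
      have hNGDS : IsGDS N := by
        have : N ∈ gdsSubmodule k n :=
          Submodule.sub_mem _ hM (hsub hPmem)
        exact this
      have hN0 : ∀ q ∈ gammaSet n, N q.1 q.2 = 0 := by
        intro q hq
        have hPq : P q.1 q.2 = M q.1 q.2 := by
          rw [hPdef, Matrix.sum_apply]
          rw [Finset.sum_eq_single q]
          · simp [Matrix.smul_apply, smul_eq_mul, (hG q hq).2.1]
          · intro p hp hpq
            have hpΓ : p ∈ gammaSet n := (Finset.mem_filter.mp hp).2
            simp [Matrix.smul_apply, smul_eq_mul, hGzero p hpΓ q hq hpq]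
          · intro h; exact absurd (Finset.mem_filter.mpr ⟨Finset.mem_univ q, hq⟩) h
        rw [hNdef]
        simp [Matrix.sub_apply, hPq]
      obtain ⟨s, hrow, hcol⟩ := hNGDS
      -- column and row structure
      have hND : ∀ j : Fin n, N j j + N (j + 1) j = s := by
        intro j
        rw [← hcol j]
        rw [show (∑ i, N i j) = ∑ i ∈ ({j, j + 1} : Finset (Fin n)), N i j from
          (Finset.sum_subset (Finset.subset_univ _) (fun i _ hi => by
            simp only [Finset.mem_insert, Finset.mem_singleton, not_or] at hi
            exact hN0 (i, j) ⟨hi.1, hi.2⟩)).symm,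
          Finset.sum_pair (fun h => hadd j h.symm)]
      have hNR : ∀ i : Fin n, N i i + N i (i - 1) = s := by
        intro i
        rw [← hrow i]
        have hi1 : i ≠ i - 1 := by
          intro h
          exact hadd (i - 1) (by rw [sub_add_cancel]; exact h)
        rw [show (∑ j, N i j) = ∑ j ∈ ({i, i - 1} : Finset (Fin n)), N i j from
          (Finset.sum_subset (Finset.subset_univ _) (fun j _ hj => by
            simp only [Finset.mem_insert, Finset.mem_singleton, not_or] at hj
            exact hN0 (i, j) ⟨fun h => hj.1 h.symm,
              fun (h : i = j + 1) => hj.2 (by rw [h, add_sub_cancel_right])⟩)).symm,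
          Finset.sum_pair hi1]
      have hstep : ∀ i : Fin n, N (i + 1 + 1) (i + 1) = N (i + 1) i := by
        intro i
        have h1 := hNR (i + 1)
        rw [add_sub_cancel_right] at h1
        have h2 := hND (i + 1)
        exact (add_left_cancel (h2.trans h1.symm))
      have hE : ∀ j : Fin n, N (j + 1) j = N (0 + 1) 0 := by
        open Fin.NatCast Fin.CommRing in
        have key : ∀ m : ℕ, N ((m : Fin n) + 1) (m : Fin n) = N (0 + 1) 0 := by
          intro m
          induction m with
          | zero => norm_num
          | succ m ih =>
            have : ((m + 1 : ℕ) : Fin n) = (m : Fin n) + 1 := by push_cast; ring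
            rw [this, hstep m, ih]
        intro j
        have := key j.val
        rwa [Fin.cast_val_eq_self] at this
      have hD : ∀ j : Fin n, N j j = N 0 0 := by
        intro j
        have h1 := hND j
        have h2 := hND 0
        rw [hE j] at h1
        rw [← h2] at h1
        exact add_right_cancel h1
      have hNeq : N = N (0 + 1) 0 • cQ k n + N 0 0 • (1 : Matrix (Fin n) (Fin n) k) := by
        funext i j
        show N i j = (N (0+1) 0 • cQ k n + N 0 0 • (1 : Matrix (Fin n) (Fin n) k)) i j
        rw [Matrix.add_apply, Matrix.smul_apply, Matrix.smul_apply, smul_eq_mul, smul_eq_mul]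
        by_cases h1 : i = j
        · subst h1
          have hq : cQ k n i i = 0 := by
            simp only [cQ, Matrix.of_apply]
            exact if_neg (fun h => hadd i h.symm)
          rw [hq, Matrix.one_apply_eq, mul_zero, mul_one, zero_add]
          exact hD i
        · by_cases h2 : i = j + 1
          · subst h2
            have hq : cQ k n (j + 1) j = 1 := by simp [cQ]
            rw [hq, Matrix.one_apply_ne (fun h => hadd j h), mul_one, mul_zero, add_zero]
            exact hE j
          · rw [hN0 (i, j) ⟨h1, h2⟩, hQzero (i, j) ⟨h1, h2⟩, hIzero (i, j) ⟨h1, h2⟩]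
            simp
      have hQmem : cQ k n ∈ Submodule.span k (Set.range v) := by
        apply Submodule.subset_span
        exact ⟨Sum.inr true, by simp [hv]⟩
      have hImem : (1 : Matrix (Fin n) (Fin n) k) ∈ Submodule.span k (Set.range v) := by
        apply Submodule.subset_span
        exact ⟨Sum.inr false, by simp [hv]⟩
      have hNmem : N ∈ Submodule.span k (Set.range v) := by
        rw [hNeq]
        exact Submodule.add_mem _ (Submodule.smul_mem _ _ hQmem) (Submodule.smul_mem _ _ hImem)
      have : M = P + N := by rw [hNdef]; abel
      rw [this]
      exact Submodule.add_mem _ hPmem hNmem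
    · intro hM
      exact hsub hM
  · -- cardinality
    have hdec : DecidablePred (· ∈ gammaSet n) := fun p =>
      inferInstanceAs (Decidable (p.1 ≠ p.2 ∧ p.1 ≠ p.2 + 1))
    rw [Nat.card_eq_fintype_card, Fintype.card_subtype]
    have hA : (Finset.univ.filter (fun p : Fin n × Fin n => p.1 = p.2)).card = n := by
      rw [show (Finset.univ.filter (fun p : Fin n × Fin n => p.1 = p.2)) =
          Finset.univ.image (fun a : Fin n => (a, a)) by
        ext p
        simp only [Finset.mem_filter, Finset.mem_univ, true_and, Finset.mem_image]
        constructor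
        · intro h; exact ⟨p.2, Prod.ext h.symm rfl⟩
        · rintro ⟨a, rfl⟩; rfl]
      rw [Finset.card_image_of_injective _ (fun a b h => (Prod.ext_iff.mp h).1)]
      simp
    have hB : (Finset.univ.filter (fun p : Fin n × Fin n => p.1 = p.2 + 1)).card = n := by
      rw [show (Finset.univ.filter (fun p : Fin n × Fin n => p.1 = p.2 + 1)) =
          Finset.univ.image (fun a : Fin n => (a + 1, a)) by
        ext p
        simp only [Finset.mem_filter, Finset.mem_univ, true_and, Finset.mem_image]
        constructor
        · intro h; exact ⟨p.2, Prod.ext h.symm rfl⟩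
        · rintro ⟨a, rfl⟩; rfl]
      rw [Finset.card_image_of_injective _ (fun a b h => (Prod.ext_iff.mp h).2)]
      simp
    have hdisj : Disjoint (Finset.univ.filter (fun p : Fin n × Fin n => p.1 = p.2))
        (Finset.univ.filter (fun p : Fin n × Fin n => p.1 = p.2 + 1)) := by
      rw [Finset.disjoint_left]
      intro p hp hq
      simp only [Finset.mem_filter, Finset.mem_univ, true_and] at hp hq
      exact hadd p.2 (hp.symm.trans hq).symm
    have hunion : (Finset.univ.filter (fun p : Fin n × Fin n => ¬ (p ∈ gammaSet n))) =
        (Finset.univ.filter (fun p : Fin n × Fin n => p.1 = p.2)) ∪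
        (Finset.univ.filter (fun p : Fin n × Fin n => p.1 = p.2 + 1)) := by
      ext p
      simp only [Finset.mem_filter, Finset.mem_univ, true_and, Finset.mem_union]
      show ¬(p.1 ≠ p.2 ∧ p.1 ≠ p.2 + 1) ↔ _
      tauto
    have htot := Finset.card_filter_add_card_filter_not
      (s := (Finset.univ : Finset (Fin n × Fin n))) (· ∈ gammaSet n)
    rw [hunion, Finset.card_union_of_disjoint hdisj, hA, hB] at htot
    have huniv : (Finset.univ : Finset (Fin n × Fin n)).card = n * n := by
      simp [Finset.card_univ]
    rw [huniv] at htot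
    obtain ⟨m, rfl⟩ : ∃ m, n = m + 2 := ⟨n - 2, by omega⟩
    have h1 : (m + 2) * (m + 2) = m * m + 4 * m + 4 := by ring
    have h2 : (m + 2 - 1) ^ 2 = m * m + 2 * m + 1 := by
      rw [show m + 2 - 1 = m + 1 from rfl]; ring
    rw [h2]
    omega
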